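/- arXiv:2306.01831 — 4 statements merged into one kernel-verified Lean document; each statement's English description precedes it below -/
import Mathlib

section
/- Let A ∈ M_m ⊗ M_m be of the form A = ∑_{i,j} E_{ij} ⊗ a_{ij} E_{ji} with a_{ij} ≥ 0 real numbers. Then the multiset of eigenvalues of A (with algebraic multiplicity) equals {a_{ii} : 1 ≤ i ≤ m} ∪ {±√(a_{ij} a_{ji}) : 1 ≤ i < j ≤ m}. -/
/-!
The entry of `A` in row `(i, j)` and column `(k, l)` is `a i j` when `(k, l) = (j, i)` and `0`
otherwise, so `A` only couples an index pair with its swap. Grouping the indices by the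
underlying unordered pair `{i, j}` makes `A` block diagonal: the block of `{i, i}` is `(a i i)`,
and for `i < j` the block of `{i, j}` is `!![0, a i j; a j i, 0]`, whose characteristic
polynomial `X ^ 2 - a i j * a j i` has the roots `±√(a i j * a j i)`.
-/

open Matrix Kronecker BigOperators Polynomial Finset

namespace Matrix

theorem sum_single_kronecker_single_apply {ι R : Type*} [Fintype ι] [DecidableEq ι]
    [NonAssocSemiring R] (c : ι → ι → R) (p q : ι × ι) :
    (∑ i, ∑ j, single i j (1 : R) ⊗ₖ single j i (c i j)) p q =
      if q = p.swap then c p.1 p.2 else 0 := by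
  obtain ⟨p1, p2⟩ := p; obtain ⟨q1, q2⟩ := q
  simp [single_kronecker_single, Matrix.sum_apply, single_apply, ite_and]
  grind

variable {n R : Type*} [Fintype n] [DecidableEq n] [CommRing R]

theorem charpoly_eq_X_sub_C_of_forall_eq (M : Matrix n n R) {i : n} (h : ∀ j, j = i) :
    M.charpoly = X - C (M i i) := by
  let : Unique n := ⟨⟨i⟩, h⟩
  rw [charpoly, det_unique, charmatrix_apply_eq, ← h default]

theorem charpoly_eq_of_forall_eq_or_eq (M : Matrix n n R) {i j : n} (hij : i ≠ j)
    (h : ∀ k, k = i ∨ k = j) :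
    M.charpoly = (X - C (M i i)) * (X - C (M j j)) - C (M i j * M j i) := by
  let e : Fin 2 ≃ n := Equiv.ofBijective ![i, j] ⟨by
      intro a b hab; fin_cases a <;> fin_cases b <;> simp_all [eq_comm],
    fun k => by rcases h k with rfl | rfl; exacts [⟨0, rfl⟩, ⟨1, rfl⟩]⟩
  have he0 : e 0 = i := rfl
  have he1 : e 1 = j := rfl
  rw [← charpoly_reindex e.symm, charpoly, det_fin_two]
  simp [he0, he1]

end Matrix

section SortPair

variable {ι : Type*} [LinearOrder ι]

-- `Sym2 ι` carries no linear order, so the unordered pair is recorded as a sorted `Lex` pair.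
def sortPair (p : ι × ι) : Lex (ι × ι) := toLex (min p.1 p.2, max p.1 p.2)

theorem sortPair_swap (p : ι × ι) : sortPair p.swap = sortPair p := by
  simp [sortPair, min_comm, max_comm]

theorem sortPair_of_le {p : ι × ι} (h : p.1 ≤ p.2) : sortPair p = toLex p := by
  simp [sortPair, h]

theorem eq_or_eq_swap_of_sortPair_eq {p q : ι × ι} (h : sortPair q = sortPair p) :
    q = p ∨ q = p.swap := by
  obtain ⟨p1, p2⟩ := p; obtain ⟨q1, q2⟩ := q
  simp only [sortPair, EmbeddingLike.apply_eq_iff_eq, Prod.mk.injEq, Prod.swap_prod_mk] at h ⊢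
  rcases le_total p1 p2 with hp | hp <;> rcases le_total q1 q2 with hq | hq <;> simp_all

variable [Fintype ι]

theorem prod_image_sortPair {β : Type*} [CommMonoid β] (f : Lex (ι × ι) → β) :
    ∏ c ∈ univ.image sortPair, f c =
      ∏ p ∈ univ.filter (fun p : ι × ι => p.1 ≤ p.2), f (sortPair p) := by
  have himage : univ.image sortPair =
      (univ.filter fun p : ι × ι => p.1 ≤ p.2).map toLex.toEmbedding := by
    ext c
    simp only [mem_image, mem_univ, true_and, mem_map, mem_filter, Equiv.coe_toEmbedding]
    constructor
    · rintro ⟨p, rfl⟩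
      exact ⟨(min p.1 p.2, max p.1 p.2), min_le_max, rfl⟩
    · rintro ⟨p, hp, rfl⟩
      exact ⟨p, sortPair_of_le hp⟩
  rw [himage, prod_map]
  exact prod_congr rfl fun p hp => by rw [sortPair_of_le (mem_filter.1 hp).2]; rfl

theorem prod_filter_fst_le_snd {β : Type*} [CommMonoid β] (f : ι × ι → β) :
    ∏ p ∈ univ.filter (fun p : ι × ι => p.1 ≤ p.2), f p =
      (∏ i, f (i, i)) * ∏ p ∈ univ.filter (fun p : ι × ι => p.1 < p.2), f p := by
  have hdiag : ∏ p ∈ univ.filter (fun p : ι × ι => p.1 = p.2), f p = ∏ i, f (i, i) := by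
    simp [prod_filter, Fintype.prod_prod_type]
  rw [← hdiag, ← prod_union (disjoint_filter.2 fun p _ h => h.not_lt), ← filter_or]
  simp_rw [le_iff_eq_or_lt]

end SortPair

namespace Matrix

variable {ι R : Type*} [LinearOrder ι] [CommRing R] (M : Matrix (ι × ι) (ι × ι) R)

theorem blockTriangular_sortPair (hM : ∀ p q, q ≠ p.swap → M p q = 0) :
    M.BlockTriangular sortPair := by
  intro p q hlt
  refine hM p q fun hq => ?_
  rw [hq, sortPair_swap] at hlt
  exact lt_irrefl _ hlt

variable [Fintype ι]

theorem charpoly_toSquareBlock_sortPair_diag (i : ι) :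
    (M.toSquareBlock sortPair (sortPair (i, i))).charpoly = X - C (M (i, i) (i, i)) :=
  charpoly_eq_X_sub_C_of_forall_eq (M.toSquareBlock sortPair (sortPair (i, i)))
    (i := ⟨(i, i), rfl⟩) fun q => Subtype.ext ((eq_or_eq_swap_of_sortPair_eq q.2).elim id id)

theorem charpoly_toSquareBlock_sortPair_of_lt (hM : ∀ p q, q ≠ p.swap → M p q = 0) {p : ι × ι}
    (hp : p.1 < p.2) :
    (M.toSquareBlock sortPair (sortPair p)).charpoly = X ^ 2 - C (M p p.swap * M p.swap p) := by
  have hne : p ≠ p.swap := fun h => hp.ne (congrArg Prod.fst h)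
  rw [charpoly_eq_of_forall_eq_or_eq (M.toSquareBlock sortPair (sortPair p))
    (i := ⟨p, rfl⟩) (j := ⟨p.swap, sortPair_swap p⟩)
    (fun h => hne (congrArg Subtype.val h))
    (fun q => (eq_or_eq_swap_of_sortPair_eq q.2).imp Subtype.ext Subtype.ext)]
  simp [toSquareBlock_def, hM p p hne, hM p.swap p.swap (by simpa using hne.symm)]
  ring

theorem charpoly_eq_of_forall_ne_swap (hM : ∀ p q, q ≠ p.swap → M p q = 0) :
    M.charpoly = (∏ i, (X - C (M (i, i) (i, i)))) *
      ∏ p ∈ univ.filter (fun p : ι × ι => p.1 < p.2), (X ^ 2 - C (M p p.swap * M p.swap p)) := by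
  rw [(blockTriangular_sortPair M hM).charpoly, prod_image_sortPair, prod_filter_fst_le_snd]
  congr 1
  · exact prod_congr rfl fun i _ => charpoly_toSquareBlock_sortPair_diag M i
  · exact prod_congr rfl fun p hp =>
      charpoly_toSquareBlock_sortPair_of_lt M hM (mem_filter.1 hp).2

end Matrix

theorem Polynomial.roots_X_sq_sub_C_mul_self {R : Type*} [CommRing R] [IsDomain R] (r : R) :
    (X ^ 2 - C (r * r)).roots = {r, -r} := by
  have hfactor : X ^ 2 - C (r * r) = (X - C r) * (X - C (-r)) := by
    simp only [map_mul, map_neg]; ring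
  rw [hfactor, roots_mul (mul_ne_zero (X_sub_C_ne_zero r) (X_sub_C_ne_zero (-r))),
    roots_X_sub_C, roots_X_sub_C, Multiset.singleton_add]
  rfl

/-- If `A = ∑_{i,j} E_{ij} ⊗ a_{ij} E_{ji}` with `a_{ij} ≥ 0`, then the multiset of
eigenvalues (with algebraic multiplicity, i.e. the roots of the characteristic polynomial)
of `A` is `{a_{ii}} ∪ {±√(a_{ij} a_{ji}) : i < j}`. -/
theorem mspec_of_star_form (m : ℕ) (a : Fin m → Fin m → ℝ) (ha : ∀ i j, 0 ≤ a i j)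
    (A : Matrix (Fin m × Fin m) (Fin m × Fin m) ℂ)
    (hA : A = ∑ i : Fin m, ∑ j : Fin m,
      (Matrix.single i j (1 : ℂ)) ⊗ₖ (Matrix.single j i ((a i j : ℝ) : ℂ))) :
    A.charpoly.roots =
      (Finset.univ.val.map fun i : Fin m => ((a i i : ℝ) : ℂ))
      + ((Finset.univ.filter fun p : Fin m × Fin m => p.1 < p.2).val.bind
          fun p => {((Real.sqrt (a p.1 p.2 * a p.2 p.1) : ℝ) : ℂ),
                    -(((Real.sqrt (a p.1 p.2 * a p.2 p.1) : ℝ) : ℂ))}) := by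
  have hentry (p q : Fin m × Fin m) : A p q = if q = p.swap then (a p.1 p.2 : ℂ) else 0 := by
    rw [hA, sum_single_kronecker_single_apply]
  have hsupp (p q : Fin m × Fin m) (hq : q ≠ p.swap) : A p q = 0 := by
    rw [hentry, if_neg hq]
  have hdiag (i : Fin m) : A (i, i) (i, i) = a i i := by
    simp [hentry]
  have hsqrt (p : Fin m × Fin m) : A p p.swap * A p.swap p =
      (Real.sqrt (a p.1 p.2 * a p.2 p.1) : ℂ) * (Real.sqrt (a p.1 p.2 * a p.2 p.1) : ℂ) := by
    rw [← Complex.ofReal_mul, Real.mul_self_sqrt (mul_nonneg (ha _ _) (ha _ _)), hentry, hentry]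
    simp
  have hne := A.charpoly_monic.ne_zero
  rw [charpoly_eq_of_forall_ne_swap A hsupp] at hne ⊢
  rw [roots_mul hne, roots_prod _ _ (left_ne_zero_of_mul hne),
    roots_prod _ _ (right_ne_zero_of_mul hne)]
  simp only [hdiag, hsqrt, roots_X_sq_sub_C_mul_self, roots_X_sub_C, Multiset.bind_singleton]
end

section
/- Let ρ ∈ M_m be a density matrix, U ∈ M_m unitary, and let ψ be any member of the (p,q,r)-family of state over time functions. Then S(ρ) = -tr( ψ(ρ, Ad_U) log|ψ(ρ, Ad_U)| ), where S(ρ) is the von Neumann entropy of ρ and the right-hand side is computed as -∑_{λ ∈ mspec(ψ(ρ,Ad_U))} λ log|λ|, with the convention 0 log 0 = 0. -/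
open Matrix Kronecker BigOperators Polynomial

namespace EntropyAux

variable {m : ℕ} {n : Type*} [Fintype n] [DecidableEq n]

/-- the swap matrix -/
noncomputable def Sw (m : ℕ) : Matrix (Fin m × Fin m) (Fin m × Fin m) ℂ :=
  ∑ i : Fin m, ∑ j : Fin m, single i j (1:ℂ) ⊗ₖ single j i (1:ℂ)

lemma Sw_apply (x y : Fin m × Fin m) :
    Sw m x y = if x.1 = y.2 ∧ x.2 = y.1 then 1 else 0 := by
  obtain ⟨a, b⟩ := x; obtain ⟨c, d⟩ := y
  simp [Sw, Matrix.sum_apply, Matrix.single, ite_and, eq_comm]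

lemma Sw_comm (A B : Matrix (Fin m) (Fin m) ℂ) :
    Sw m * (A ⊗ₖ B) = (B ⊗ₖ A) * Sw m := by
  ext ⟨a, b⟩ ⟨c, d⟩
  simp [mul_apply, Sw_apply, Fintype.sum_prod_type, ite_and, kroneckerMap_apply, mul_comm]


lemma kron_conjTranspose (A B : Matrix (Fin m) (Fin m) ℂ) :
    (A ⊗ₖ B)ᴴ = Aᴴ ⊗ₖ Bᴴ := by
  ext ⟨a, b⟩ ⟨c, d⟩
  simp [conjTranspose_apply, kroneckerMap_apply, mul_comm]

lemma charpoly_conj (P Q A : Matrix n n ℂ) (h1 : P * Q = 1) (h2 : Q * P = 1) :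
    (P * A * Q).charpoly = A.charpoly := by
  have hc : charmatrix (P * A * Q)
      = P.map Polynomial.C * charmatrix A * Q.map Polynomial.C := by
    simp only [charmatrix, RingHom.mapMatrix_apply]
    have hmap : ∀ X Y : Matrix n n ℂ, (X * Y).map Polynomial.C
        = X.map Polynomial.C * Y.map Polynomial.C := fun X Y =>
      Matrix.map_mul
    rw [Matrix.mul_sub, Matrix.sub_mul]
    congr 1
    · rw [← (Matrix.scalar_commute (X : ℂ[X]) (Commute.all _) _).eq, Matrix.mul_assoc,
        ← hmap, h1]
      simp
    · rw [hmap, hmap]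
  rw [Matrix.charpoly, Matrix.charpoly, hc, det_mul, det_mul]
  have : P.map Polynomial.C * Q.map Polynomial.C = 1 := by
    rw [← Matrix.map_mul, h1]; simp
  have hdet : (P.map Polynomial.C).det * (Q.map Polynomial.C).det = 1 := by
    rw [← det_mul, this, det_one]
  calc (P.map Polynomial.C).det * (charmatrix A).det * (Q.map Polynomial.C).det
      = (charmatrix A).det * ((P.map Polynomial.C).det * (Q.map Polynomial.C).det) := by ring
    _ = (charmatrix A).det := by rw [hdet, mul_one]

lemma eval_charpoly (M : Matrix n n ℂ) (z : ℂ) :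
    M.charpoly.eval z = (z • (1 : Matrix n n ℂ) - M).det := by
  rw [Matrix.charpoly, ← Polynomial.coe_evalRingHom, RingHom.map_det]
  congr 1
  ext i j
  by_cases h : i = j <;>
    simp [h, charmatrix_apply_eq, charmatrix_apply_ne, Matrix.one_apply, Matrix.smul_apply,
      Matrix.sub_apply]

lemma charpoly_diagonal (v : n → ℂ) :
    (Matrix.diagonal v).charpoly = ∏ i, (X - Polynomial.C (v i)) := by
  rw [Matrix.charpoly]
  have : charmatrix (Matrix.diagonal v) = Matrix.diagonal fun i => X - Polynomial.C (v i) := by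
    ext i j
    by_cases h : i = j <;>
      simp [h, charmatrix_apply_eq, charmatrix_apply_ne, Matrix.diagonal_apply_ne]
  rw [this, det_diagonal]

lemma roots_charpoly_diagonal (v : n → ℂ) :
    (Matrix.diagonal v).charpoly.roots = Finset.univ.val.map v := by
  rw [charpoly_diagonal, Finset.prod_eq_multiset_prod]
  have : Multiset.map (fun i => X - Polynomial.C (v i)) Finset.univ.val
      = Multiset.map (fun a => X - Polynomial.C a) (Multiset.map v Finset.univ.val) := by
    rw [Multiset.map_map]; rfl
  rw [this, Polynomial.roots_multiset_prod_X_sub_C]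


lemma roots_charpoly_neg (M : Matrix n n ℂ) :
    (-M).charpoly.roots = M.charpoly.roots.map (fun z => -z) := by
  have hM : M.charpoly.Monic := Matrix.charpoly_monic M
  have hsp : M.charpoly.Splits := IsAlgClosed.splits _
  have hcard : Multiset.card M.charpoly.roots = Fintype.card n := by
    rw [Polynomial.splits_iff_card_roots.mp hsp, Matrix.charpoly_natDegree_eq_dim]
  have hP : M.charpoly = (M.charpoly.roots.map fun a => X - Polynomial.C a).prod :=
    hsp.eq_prod_roots_of_monic hM
  have key : (-M).charpoly = (M.charpoly.roots.map fun a => X - Polynomial.C (-a)).prod := by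
    apply Polynomial.funext
    intro z
    have h1 : (-M).charpoly.eval z = (z • (1 : Matrix n n ℂ) + M).det := by
      rw [eval_charpoly, sub_neg_eq_add]
    have h2 : M.charpoly.eval (-z) = ((-1 : ℂ) ^ Fintype.card n)
        * (z • (1 : Matrix n n ℂ) + M).det := by
      rw [eval_charpoly]
      have : (-z) • (1 : Matrix n n ℂ) - M = -(z • (1 : Matrix n n ℂ) + M) := by
        rw [neg_add, neg_smul]; abel
      rw [this, Matrix.det_neg]
    have h3 : M.charpoly.eval (-z)
        = (M.charpoly.roots.map fun a => -z - a).prod := by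
      conv_lhs => rw [hP]
      rw [Polynomial.eval_multiset_prod, Multiset.map_map]
      simp
    have h4 : (M.charpoly.roots.map fun a => -z - a).prod
        = ((-1 : ℂ) ^ Fintype.card n) * (M.charpoly.roots.map fun a => z + a).prod := by
      have : (M.charpoly.roots.map fun a => -z - a)
          = (M.charpoly.roots.map fun a => z + a).map Neg.neg := by
        rw [Multiset.map_map]
        apply Multiset.map_congr rfl
        intro a _
        simp only [Function.comp_apply]; ring
      rw [this, Multiset.prod_map_neg, Multiset.card_map, hcard]
    have h5 : (z • (1 : Matrix n n ℂ) + M).det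
        = (M.charpoly.roots.map fun a => z + a).prod := by
      have hne : ((-1 : ℂ) ^ Fintype.card n) ≠ 0 := by
        apply pow_ne_zero; norm_num
      apply mul_left_cancel₀ hne
      rw [← h2, h3, h4]
    rw [h1, h5, Polynomial.eval_multiset_prod, Multiset.map_map]
    apply congrArg
    apply Multiset.map_congr rfl
    intro a _
    simp [sub_neg_eq_add, add_comm]
  rw [key]
  have : (M.charpoly.roots.map fun a => X - Polynomial.C (-a))
      = Multiset.map (fun a => X - Polynomial.C a) (M.charpoly.roots.map fun z => -z) := by
    rw [Multiset.map_map]; rfl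
  rw [this, Polynomial.roots_multiset_prod_X_sub_C]

def pairEquiv (m : ℕ) : (Fin m ⊕ {x : Fin m × Fin m // x.1 ≠ x.2}) ≃ (Fin m × Fin m) where
  toFun := Sum.elim (fun i => (i, i)) (fun x => x.val)
  invFun := fun x => if h : x.1 = x.2 then Sum.inl x.1 else Sum.inr ⟨x, h⟩
  left_inv := by
    rintro (i | ⟨⟨a, b⟩, h⟩)
    · simp
    · simp; exact dif_neg h
  right_inv := by
    rintro ⟨a, b⟩
    by_cases h : a = b
    · subst h; simp
    · simp [dif_neg h]

end EntropyAux

open EntropyAux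

/-- For any member `ψ` of the `(p,q,r)`-family of state over time functions and any
unitary process `(ρ, Ad_U)`, the von Neumann entropy of `ρ` equals
`-∑_{λ ∈ mspec(ψ(ρ,Ad_U))} λ log|λ|` (with the convention `0 log 0 = 0`), where the
multispectrum is the multiset of roots of the characteristic polynomial. -/
theorem entropy_pqr_family_unitary (m : ℕ)
    (V U : Matrix (Fin m) (Fin m) ℂ)
    (hV : V ∈ Matrix.unitaryGroup (Fin m) ℂ) (hU : U ∈ Matrix.unitaryGroup (Fin m) ℂ)
    (l : Fin m → ℝ) (hl : ∀ i, 0 ≤ l i) (hltr : ∑ i, l i = 1)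
    (ρ : Matrix (Fin m) (Fin m) ℂ)
    (hρ : ρ = V * Matrix.diagonal (fun i => ((l i : ℝ) : ℂ)) * Vᴴ)
    (rpow : ℝ → Matrix (Fin m) (Fin m) ℂ)
    (hrpow : ∀ t, rpow t = V * Matrix.diagonal (fun i => ((l i ^ t : ℝ) : ℂ)) * Vᴴ)
    (p q r : ℝ) (hp : p ∈ Set.Icc (0 : ℝ) 1) (hq : q ∈ Set.Icc (0 : ℝ) 1)
    (hr : r ∈ Set.Icc (0 : ℝ) 1)
    (J : Matrix (Fin m × Fin m) (Fin m × Fin m) ℂ)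
    (hJ : J = ∑ i : Fin m, ∑ j : Fin m,
      single i j (1 : ℂ) ⊗ₖ (U * single j i (1 : ℂ) * Uᴴ))
    (ψ : Matrix (Fin m × Fin m) (Fin m × Fin m) ℂ)
    (hψ : ψ = ((r : ℝ) : ℂ) • ((rpow p ⊗ₖ (1 : Matrix (Fin m) (Fin m) ℂ)) * J
                * (rpow (1 - p) ⊗ₖ (1 : Matrix (Fin m) (Fin m) ℂ)))
            + (((1 - r : ℝ)) : ℂ) • ((rpow q ⊗ₖ (1 : Matrix (Fin m) (Fin m) ℂ)) * J
                * (rpow (1 - q) ⊗ₖ (1 : Matrix (Fin m) (Fin m) ℂ)))) :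
    -(∑ i, l i * Real.log |l i|)
      = -(((ψ.charpoly.roots).map (fun z => z.re * Real.log ‖z‖)).sum) := by
  classical
  set W : Matrix (Fin m) (Fin m) ℂ := U * V with hWdef
  set Ds : ℝ → Matrix (Fin m) (Fin m) ℂ :=
    fun s => Matrix.diagonal (fun i => ((l i ^ s : ℝ) : ℂ)) with hDs
  -- J in terms of the swap matrix
  have hJS : (1 ⊗ₖ U) * Sw m * ((1 : Matrix (Fin m) (Fin m) ℂ) ⊗ₖ Uᴴ) = J := by
    rw [hJ, Sw]
    simp only [Finset.mul_sum, Finset.sum_mul, ← mul_kronecker_mul, Matrix.one_mul,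
      Matrix.mul_one]
  -- each term of ψ is a unitary conjugation
  have hterm : ∀ s t : ℝ,
      (rpow s ⊗ₖ (1 : Matrix (Fin m) (Fin m) ℂ)) * J
          * (rpow t ⊗ₖ (1 : Matrix (Fin m) (Fin m) ℂ))
        = (V ⊗ₖ W) * ((Ds s ⊗ₖ Ds t) * Sw m) * (V ⊗ₖ W)ᴴ := by
    intro s t
    rw [← hJS]
    have e1 : (rpow s ⊗ₖ (1 : Matrix (Fin m) (Fin m) ℂ)) * ((1 : Matrix (Fin m) (Fin m) ℂ) ⊗ₖ U)
        = rpow s ⊗ₖ U := by rw [← mul_kronecker_mul, Matrix.mul_one, Matrix.one_mul]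
    have e2 : ((1 : Matrix (Fin m) (Fin m) ℂ) ⊗ₖ Uᴴ) * (rpow t ⊗ₖ (1 : Matrix (Fin m) (Fin m) ℂ))
        = rpow t ⊗ₖ Uᴴ := by rw [← mul_kronecker_mul, Matrix.mul_one, Matrix.one_mul]
    calc (rpow s ⊗ₖ (1 : Matrix (Fin m) (Fin m) ℂ))
          * ((1 ⊗ₖ U) * Sw m * ((1 : Matrix (Fin m) (Fin m) ℂ) ⊗ₖ Uᴴ))
          * (rpow t ⊗ₖ (1 : Matrix (Fin m) (Fin m) ℂ))
        = ((rpow s ⊗ₖ (1 : Matrix (Fin m) (Fin m) ℂ)) * ((1 : Matrix (Fin m) (Fin m) ℂ) ⊗ₖ U))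
            * Sw m * (((1 : Matrix (Fin m) (Fin m) ℂ) ⊗ₖ Uᴴ)
              * (rpow t ⊗ₖ (1 : Matrix (Fin m) (Fin m) ℂ))) := by
          simp only [Matrix.mul_assoc]
      _ = (rpow s ⊗ₖ U) * Sw m * (rpow t ⊗ₖ Uᴴ) := by rw [e1, e2]
      _ = (rpow s ⊗ₖ U) * ((Uᴴ ⊗ₖ rpow t) * Sw m) := by
          rw [Matrix.mul_assoc, Sw_comm]
      _ = ((rpow s * Uᴴ) ⊗ₖ (U * rpow t)) * Sw m := by
          rw [← Matrix.mul_assoc, mul_kronecker_mul]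
      _ = ((V * Ds s * Wᴴ) ⊗ₖ (W * Ds t * Vᴴ)) * Sw m := by
          rw [hrpow s, hrpow t, hWdef]
          simp only [Matrix.conjTranspose_mul, Matrix.mul_assoc, hDs]
      _ = ((V ⊗ₖ W) * ((Ds s ⊗ₖ Ds t) * ((Wᴴ ⊗ₖ Vᴴ) * Sw m))) := by
          rw [mul_kronecker_mul, mul_kronecker_mul]
          simp only [Matrix.mul_assoc]
      _ = (V ⊗ₖ W) * ((Ds s ⊗ₖ Ds t) * Sw m) * (V ⊗ₖ W)ᴴ := by
          rw [kron_conjTranspose, ← Sw_comm]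
          simp only [Matrix.mul_assoc]
  -- the conjugated core matrix
  set cc : Fin m × Fin m → ℂ := fun x =>
    ((r * (l x.1 ^ p * l x.2 ^ (1 - p)) + (1 - r) * (l x.1 ^ q * l x.2 ^ (1 - q)) : ℝ) : ℂ)
    with hcc
  set T : Matrix (Fin m × Fin m) (Fin m × Fin m) ℂ := Matrix.diagonal cc * Sw m with hTdef
  have hψ2 : ψ = (V ⊗ₖ W) * T * (V ⊗ₖ W)ᴴ := by
    rw [hψ, hterm p (1 - p), hterm q (1 - q), hTdef]
    have : Matrix.diagonal cc
        = ((r : ℝ) : ℂ) • (Ds p ⊗ₖ Ds (1 - p)) + (((1 - r : ℝ)) : ℂ) • (Ds q ⊗ₖ Ds (1 - q)) := by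
      rw [hDs]
      ext x y
      by_cases hxy : x = y
      · subst hxy
        simp only [Matrix.diagonal_kronecker_diagonal, Matrix.add_apply, Matrix.smul_apply,
          Matrix.diagonal_apply_eq, smul_eq_mul, hcc]
        push_cast
        ring
      · simp [Matrix.diagonal_kronecker_diagonal, Matrix.diagonal_apply_ne _ hxy]
    rw [this]
    simp only [Matrix.add_mul, Matrix.mul_add, Matrix.smul_mul, Matrix.mul_smul]
  -- charpoly is conjugation invariant
  have hWu : W ∈ Matrix.unitaryGroup (Fin m) ℂ := mul_mem hU hV
  have h1 : (V ⊗ₖ W) * (V ⊗ₖ W)ᴴ = 1 := by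
    rw [kron_conjTranspose, ← mul_kronecker_mul]
    have hv : V * Vᴴ = 1 := by
      have := (Matrix.mem_unitaryGroup_iff).mp hV
      rwa [Matrix.star_eq_conjTranspose] at this
    have hw : W * Wᴴ = 1 := by
      have := (Matrix.mem_unitaryGroup_iff).mp hWu
      rwa [Matrix.star_eq_conjTranspose] at this
    rw [hv, hw, Matrix.one_kronecker_one]
  have h2 : (V ⊗ₖ W)ᴴ * (V ⊗ₖ W) = 1 := by
    rw [kron_conjTranspose, ← mul_kronecker_mul]
    have hv : Vᴴ * V = 1 := by
      have := (Matrix.mem_unitaryGroup_iff').mp hV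
      rwa [Matrix.star_eq_conjTranspose] at this
    have hw : Wᴴ * W = 1 := by
      have := (Matrix.mem_unitaryGroup_iff').mp hWu
      rwa [Matrix.star_eq_conjTranspose] at this
    rw [hv, hw, Matrix.one_kronecker_one]
  have hchar : ψ.charpoly = T.charpoly := by
    rw [hψ2]
    exact charpoly_conj _ _ _ h1 h2
  -- entry formula for T
  have hTapp : ∀ x y : Fin m × Fin m,
      T x y = cc x * (if x.1 = y.2 ∧ x.2 = y.1 then 1 else 0) := by
    intro x y
    rw [hTdef, Matrix.diagonal_mul, Sw_apply]
  -- reindex along the diagonal/off-diagonal decomposition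
  set Ω := {x : Fin m × Fin m // x.1 ≠ x.2}
  set DD : Matrix Ω Ω ℂ := Matrix.of (fun x y : Ω => T x.val y.val) with hDD
  have hccd : ∀ i : Fin m, cc (i, i) = ((l i : ℝ) : ℂ) := by
    intro i
    have hx : ∀ s : ℝ, l i ^ s * l i ^ (1 - s) = l i := by
      intro s
      rw [← Real.rpow_add' (hl i) (by norm_num : s + (1 - s) ≠ 0)]
      norm_num
    rw [hcc]
    simp only
    rw [hx p, hx q]
    push_cast
    ring
  have hblock : T.submatrix (pairEquiv m) (pairEquiv m)
      = Matrix.fromBlocks (Matrix.diagonal fun i => ((l i : ℝ) : ℂ)) 0 0 DD := by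
    ext i j
    rcases i with i | x <;> rcases j with j | y <;>
      simp only [Matrix.submatrix_apply, pairEquiv, Equiv.coe_fn_mk, Sum.elim_inl,
        Sum.elim_inr, Matrix.fromBlocks_apply₁₁, Matrix.fromBlocks_apply₁₂,
        Matrix.fromBlocks_apply₂₁, Matrix.fromBlocks_apply₂₂, Matrix.zero_apply, hDD,
        Matrix.of_apply]
    · rw [hTapp]
      by_cases h : i = j
      · subst h
        simp [hccd i, Matrix.diagonal_apply_eq]
      · simp [Matrix.diagonal_apply_ne _ h, h]
    · rw [hTapp, if_neg, mul_zero]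
      rintro ⟨hh1, hh2⟩
      exact y.prop (hh2.symm.trans hh1)
    · rw [hTapp, if_neg, mul_zero]
      rintro ⟨hh1, hh2⟩
      exact x.prop (hh1.trans hh2.symm)
  have hcharT : T.charpoly
      = (Matrix.diagonal fun i : Fin m => ((l i : ℝ) : ℂ)).charpoly * DD.charpoly := by
    have h3 : T.charpoly = (T.submatrix (pairEquiv m) (pairEquiv m)).charpoly := by
      have := Matrix.charpoly_reindex (pairEquiv m).symm T
      rw [Matrix.reindex_apply, Equiv.symm_symm] at this
      exact this.symm
    rw [h3, hblock, Matrix.charpoly_fromBlocks_zero₂₁]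
  -- symmetry of the off-diagonal block under negation
  set G : Matrix Ω Ω ℂ :=
    Matrix.diagonal (fun x : Ω => if x.val.1 < x.val.2 then (1 : ℂ) else -1) with hG
  have hGG : G * G = 1 := by
    rw [hG, Matrix.diagonal_mul_diagonal]
    have : (fun x : Ω => (if x.val.1 < x.val.2 then (1 : ℂ) else -1)
        * (if x.val.1 < x.val.2 then (1 : ℂ) else -1)) = fun _ => 1 := by
      funext x
      split_ifs <;> ring
    rw [this, Matrix.diagonal_one]
  have hGDG : G * DD * G = -DD := by
    ext x y
    rw [hG, Matrix.mul_diagonal, Matrix.diagonal_mul]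
    show (if x.val.1 < x.val.2 then (1 : ℂ) else -1) * DD x y
        * (if y.val.1 < y.val.2 then (1 : ℂ) else -1) = -(DD x y)
    have hDxy : DD x y = cc x.val * (if x.val.1 = y.val.2 ∧ x.val.2 = y.val.1 then 1 else 0) :=
      hTapp x.val y.val
    by_cases h : x.val.1 = y.val.2 ∧ x.val.2 = y.val.1
    · obtain ⟨ha, hb⟩ := h
      rcases lt_trichotomy x.val.1 x.val.2 with hlt | heq | hgt
      · rw [if_pos hlt, if_neg (by rw [← hb, ← ha]; exact not_lt.mpr hlt.le)]
        ring
      · exact absurd heq x.prop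
      · rw [if_neg (not_lt.mpr hgt.le), if_pos (by rw [← hb, ← ha]; exact hgt)]
        ring
    · rw [hDxy, if_neg h, mul_zero, mul_zero, zero_mul, neg_zero]
  have hnegchar : (-DD).charpoly = DD.charpoly := by
    rw [← hGDG]
    exact charpoly_conj _ _ _ hGG hGG
  have hsym : DD.charpoly.roots = DD.charpoly.roots.map (fun z => -z) := by
    conv_lhs => rw [← hnegchar]
    exact roots_charpoly_neg DD
  -- put everything together
  set f : ℂ → ℝ := fun z => z.re * Real.log ‖z‖ with hf
  have hroots : ψ.charpoly.roots
      = Finset.univ.val.map (fun i : Fin m => ((l i : ℝ) : ℂ)) + DD.charpoly.roots := by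
    rw [hchar, hcharT, Polynomial.roots_mul
      (mul_ne_zero (Matrix.charpoly_monic _).ne_zero (Matrix.charpoly_monic _).ne_zero),
      roots_charpoly_diagonal]
  have hzero : (DD.charpoly.roots.map f).sum = 0 := by
    have hstep : (DD.charpoly.roots.map f).sum = -(DD.charpoly.roots.map f).sum := by
      conv_lhs => rw [hsym, Multiset.map_map]
      have : (f ∘ fun z : ℂ => -z) = fun z => -(f z) := by
        funext z
        simp only [Function.comp_apply, hf, Complex.neg_re, norm_neg]
        ring
      rw [this, Multiset.sum_map_neg]
    linarith
  rw [hroots, Multiset.map_add, Multiset.sum_add, hzero, add_zero, Multiset.map_map]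
  congr 1
  rw [Finset.sum_eq_multiset_sum]
  apply congrArg
  apply Multiset.map_congr rfl
  intro i _
  simp [hf, Complex.norm_real]
end

section
/- Let X be a finite set, p : X → ℝ a quasi-probability distribution (∑_x p_x = 1), and {ρ^x}_{x∈X} a collection of mutually orthogonal unit-trace hermitian n×n matrices. Then S(∑_x p_x ρ^x) = H(p) + ∑_x p_x S(ρ^x), where S(A) = -∑_{λ ∈ mspec(A)} λ log|λ| and H(p) = -∑_x p_x log|p_x|. -/
open Matrix Kronecker BigOperators

/-- The extended entropy `S(A) = -∑_{λ ∈ mspec(A)} λ log|λ|` (with `0 log 0 = 0`). -/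
noncomputable def extEnt {k : Type*} [Fintype k] [DecidableEq k]
    (A : Matrix k k ℂ) : ℝ :=
  -(((A.charpoly.roots).map (fun z => z.re * Real.log ‖z‖)).sum)

/-!
If `A * B = 0` then `(X - A) (X - B) = X (X - (A + B))`, so the spectrum of `A + B` is that of `A`
together with that of `B`, up to zeros, which contribute nothing to the entropy; hence `S` is
additive on mutually orthogonal matrices. Scaling a matrix by a real `c ≠ 0` scales its spectrum,
and `c λ log |c λ| = c log |c| · λ + c · λ log |λ|` turns `S(c ρ)` into
`-c log |c| tr ρ + c S(ρ)`. Summing over `x` with `tr ρ^x = 1` gives the claim.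
-/

open Polynomial

namespace Matrix

variable {k : Type*} [Fintype k] [DecidableEq k]

theorem charpoly_mul_charpoly_of_mul_eq_zero {R : Type*} [CommRing R] {A B : Matrix k k R}
    (h : A * B = 0) :
    A.charpoly * B.charpoly = X ^ Fintype.card k * (A + B).charpoly := by
  set φ := (C : R →+* R[X]).mapMatrix (m := k)
  have hφ : φ A * φ B = 0 := by rw [← map_mul, h, map_zero]
  have hX : Commute (scalar k (X : R[X])) (φ A) := scalar_commute _ (fun _ => Commute.all _ _) _
  have hchar : charmatrix A * charmatrix B = scalar k (X : R[X]) * charmatrix (A + B) := by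
    simp only [charmatrix, map_add]
    rw [sub_mul, mul_sub, mul_sub, hφ, mul_sub, mul_add, ← hX.eq]
    abel
  rw [charpoly, charpoly, ← det_mul, hchar, det_mul, charpoly]
  simp [scalar_apply, det_diagonal]

theorem charpoly_smul_eq_scaleRoots {K : Type*} [Field K] [Infinite K] {c : K} (hc : c ≠ 0)
    (A : Matrix k k K) : (c • A).charpoly = A.charpoly.scaleRoots c := by
  refine Polynomial.funext fun t => ?_
  obtain ⟨s, rfl⟩ : ∃ s, t = c * s := ⟨c⁻¹ * t, by field_simp⟩
  rw [eval_charpoly, scaleRoots_eval_mul, eval_charpoly, charpoly_natDegree_eq_dim, ← det_smul,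
    smul_sub]
  congr 2
  ext i j
  simp [scalar_apply, diagonal_apply]

theorem roots_charpoly_smul {K : Type*} [Field K] [Infinite K] {c : K} (hc : c ≠ 0)
    (A : Matrix k k K) : (c • A).charpoly.roots = A.charpoly.roots.map (c * ·) := by
  rw [charpoly_smul_eq_scaleRoots hc, roots_scaleRoots _ hc.isUnit]

end Matrix

noncomputable def entropyTerm (z : ℂ) : ℝ := z.re * Real.log ‖z‖

@[simp]
theorem entropyTerm_zero : entropyTerm 0 = 0 := by simp [entropyTerm]

theorem entropyTerm_ofReal_mul (c : ℝ) (z : ℂ) :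
    entropyTerm (c * z) = c * Real.log |c| * z.re + c * entropyTerm z := by
  rcases eq_or_ne c 0 with rfl | hc
  · simp
  rcases eq_or_ne z 0 with rfl | hz
  · simp
  rw [entropyTerm, entropyTerm, Complex.re_ofReal_mul, norm_mul, Complex.norm_real,
    Real.norm_eq_abs, Real.log_mul (abs_ne_zero.mpr hc) (norm_ne_zero_iff.mpr hz)]
  ring

section extEnt

variable {k : Type*} [Fintype k] [DecidableEq k]

theorem extEnt_eq_neg_sum_entropyTerm (A : Matrix k k ℂ) :
    extEnt A = -(A.charpoly.roots.map entropyTerm).sum := rfl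

theorem extEnt_zero : extEnt (0 : Matrix k k ℂ) = 0 := by
  simp [extEnt_eq_neg_sum_entropyTerm, charpoly_zero, Multiset.map_nsmul, Multiset.sum_nsmul]

theorem extEnt_add_of_mul_eq_zero {A B : Matrix k k ℂ} (h : A * B = 0) :
    extEnt (A + B) = extEnt A + extEnt B := by
  have hroots : A.charpoly.roots + B.charpoly.roots
      = Fintype.card k • {0} + (A + B).charpoly.roots := by
    rw [← roots_mul (mul_ne_zero A.charpoly_monic.ne_zero B.charpoly_monic.ne_zero),
      charpoly_mul_charpoly_of_mul_eq_zero h,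
      roots_mul (mul_ne_zero (pow_ne_zero _ X_ne_zero) (A + B).charpoly_monic.ne_zero),
      roots_pow, roots_X]
  have hsum := congrArg (fun s => (s.map entropyTerm).sum) hroots
  simp only [Multiset.map_add, Multiset.sum_add, Multiset.map_nsmul, Multiset.sum_nsmul,
    Multiset.map_singleton, Multiset.sum_singleton, entropyTerm_zero, smul_zero, zero_add] at hsum
  simp only [extEnt_eq_neg_sum_entropyTerm, ← hsum]
  ring

theorem extEnt_sum_of_pairwise_mul_eq_zero {ι : Type*} (s : Finset ι) {σ : ι → Matrix k k ℂ}
    (h : Pairwise fun x y => σ x * σ y = 0) :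
    extEnt (∑ x ∈ s, σ x) = ∑ x ∈ s, extEnt (σ x) := by
  induction s using Finset.cons_induction with
  | empty => simp [extEnt_zero]
  | cons a s ha ih =>
    rw [Finset.sum_cons, Finset.sum_cons, extEnt_add_of_mul_eq_zero, ih]
    rw [Finset.mul_sum]
    exact Finset.sum_eq_zero fun x hx => h fun hax => ha (hax ▸ hx)

theorem extEnt_ofReal_smul (c : ℝ) (A : Matrix k k ℂ) :
    extEnt ((c : ℂ) • A) = -(c * Real.log |c| * A.trace.re) + c * extEnt A := by
  rcases eq_or_ne c 0 with rfl | hc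
  · simp [extEnt_zero]
  have htrace : A.trace.re = (A.charpoly.roots.map Complex.re).sum := by
    rw [trace_eq_sum_roots_charpoly]
    exact map_multiset_sum Complex.reAddGroupHom _
  simp only [extEnt_eq_neg_sum_entropyTerm, roots_charpoly_smul (Complex.ofReal_ne_zero.mpr hc),
    Multiset.map_map, Function.comp_def, entropyTerm_ofReal_mul, Multiset.sum_map_add,
    Multiset.sum_map_mul_left, htrace]
  ring

end extEnt

theorem extEnt_orthogonal_affinity_general (X : Type*) [Fintype X] (n : ℕ)
    (p : X → ℝ)
    (ρ : X → Matrix (Fin n) (Fin n) ℂ)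
    (htr : ∀ x, (ρ x).trace = 1)
    (horth : ∀ x y, x ≠ y → ρ x * ρ y = 0) :
    extEnt (∑ x, ((p x : ℝ) : ℂ) • ρ x)
      = (-(∑ x, p x * Real.log |p x|)) + ∑ x, p x * extEnt (ρ x) := by
  have hsmul_orth : Pairwise fun x y => ((p x : ℂ) • ρ x) * ((p y : ℂ) • ρ y) = 0 :=
    fun x y hxy => by dsimp only; rw [smul_mul_smul_comm, horth x y hxy, smul_zero]
  simp only [extEnt_sum_of_pairwise_mul_eq_zero _ hsmul_orth, extEnt_ofReal_smul, htr,
    Complex.one_re, mul_one, Finset.sum_add_distrib, Finset.sum_neg_distrib]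

/-- Orthogonal affinity of the extended entropy: for a quasi-probability distribution `p`
on a finite set `X` and mutually orthogonal unit-trace hermitian matrices `ρ^x`,
`S(∑_x p_x ρ^x) = H(p) + ∑_x p_x S(ρ^x)`, where `H(p) = -∑_x p_x log|p_x|`. -/
theorem extEnt_orthogonal_affinity (X : Type*) [Fintype X] [DecidableEq X] (n : ℕ)
    (p : X → ℝ) (hp : ∑ x, p x = 1)
    (ρ : X → Matrix (Fin n) (Fin n) ℂ)
    (hherm : ∀ x, (ρ x).IsHermitian)
    (htr : ∀ x, (ρ x).trace = 1)
    (horth : ∀ x y, x ≠ y → ρ x * ρ y = 0) :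
    extEnt (∑ x, ((p x : ℝ) : ℂ) • ρ x)
      = (-(∑ x, p x * Real.log |p x|)) + ∑ x, p x * extEnt (ρ x) :=
  extEnt_orthogonal_affinity_general X n p ρ htr horth
end

section
/- Let E : M_p ⊗ M_n → M_n be the partial trace over the first factor and let ρ = τ ⊗ σ with τ ∈ M_p hermitian and σ ∈ M_n. Then the symmetric bloom satisfies ψ_S(ρ, E) = τ ⊗ ψ_S(σ, id), where ψ_S(ρ, E) = ½{ρ ⊗ 1, J[E]} is the Jordan product of ρ ⊗ 1 with the channel state J[E]. -/
/-!
After reassociating the tensor factors, `J[E] = 1_p ⊗ J[id]` and `ρ ⊗ 1 = τ ⊗ (σ ⊗ 1)`.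
Since `1_p` commutes with `τ`, the anticommutator of `τ ⊗ X` with `1_p ⊗ Y` is `τ ⊗ {X, Y}`,
and reassociating is an algebra isomorphism, so it commutes with the Jordan product.
-/

open Matrix Kronecker

namespace Matrix

variable {ι l m n o q r α : Type*}

theorem kronecker_sum [NonUnitalNonAssocSemiring α] (A : Matrix l m α) (s : Finset ι)
    (B : ι → Matrix n o α) : A ⊗ₖ ∑ i ∈ s, B i = ∑ i ∈ s, A ⊗ₖ B i := by
  ext
  simp [Matrix.sum_apply, Finset.mul_sum]

theorem kronecker_kronecker_eq_reindex [Semigroup α] (A : Matrix l m α) (B : Matrix n o α)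
    (C : Matrix q r α) :
    A ⊗ₖ B ⊗ₖ C = reindex (Equiv.prodAssoc l n q).symm (Equiv.prodAssoc m o r).symm
      (A ⊗ₖ (B ⊗ₖ C)) := by
  rw [← kronecker_assoc, ← reindex_symm, Equiv.symm_apply_apply]

theorem kronecker_mul_one_kronecker_add [CommSemiring α] [Fintype l] [DecidableEq l]
    [Fintype m] (A : Matrix l l α) (X Y : Matrix m m α) :
    A ⊗ₖ X * (1 ⊗ₖ Y) + 1 ⊗ₖ Y * (A ⊗ₖ X) = A ⊗ₖ (X * Y + Y * X) := by
  rw [← mul_kronecker_mul, ← mul_kronecker_mul, mul_one, one_mul, kronecker_add]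

end Matrix

theorem symmetric_bloom_partial_trace_general (p n : ℕ)
    (τ : Matrix (Fin p) (Fin p) ℂ)
    (σ : Matrix (Fin n) (Fin n) ℂ)
    (J : Matrix ((Fin p × Fin n) × Fin n) ((Fin p × Fin n) × Fin n) ℂ)
    (hJ : J = ∑ i : Fin n, ∑ j : Fin n,
      ((1 : Matrix (Fin p) (Fin p) ℂ) ⊗ₖ Matrix.single i j (1 : ℂ))
        ⊗ₖ Matrix.single j i (1 : ℂ))
    (Jid : Matrix (Fin n × Fin n) (Fin n × Fin n) ℂ)
    (hJid : Jid = ∑ i : Fin n, ∑ j : Fin n,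
      Matrix.single i j (1 : ℂ) ⊗ₖ Matrix.single j i (1 : ℂ)) :
    (1 / 2 : ℂ) • (((τ ⊗ₖ σ) ⊗ₖ (1 : Matrix (Fin n) (Fin n) ℂ)) * J
        + J * ((τ ⊗ₖ σ) ⊗ₖ (1 : Matrix (Fin n) (Fin n) ℂ)))
    = Matrix.reindex (Equiv.prodAssoc (Fin p) (Fin n) (Fin n)).symm
        (Equiv.prodAssoc (Fin p) (Fin n) (Fin n)).symm
        (τ ⊗ₖ ((1 / 2 : ℂ) • ((σ ⊗ₖ (1 : Matrix (Fin n) (Fin n) ℂ)) * Jid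
          + Jid * (σ ⊗ₖ (1 : Matrix (Fin n) (Fin n) ℂ))))) := by
  have hJ_reindex : J = reindexAlgEquiv ℂ ℂ (Equiv.prodAssoc (Fin p) (Fin n) (Fin n)).symm
      (1 ⊗ₖ Jid) := by
    simp only [hJ, hJid, coe_reindexAlgEquiv, kronecker_sum, map_sum,
      kronecker_kronecker_eq_reindex]
  rw [hJ_reindex, kronecker_kronecker_eq_reindex, ← coe_reindexAlgEquiv ℂ ℂ, ← map_mul,
    ← map_mul, ← map_add, ← map_smul, kronecker_mul_one_kronecker_add, kronecker_smul]

/-- For the partial trace channel `E : M_p ⊗ M_n → M_n` (with channel state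
`J[E] = ∑_{i,j} (1_p ⊗ E_{ij}^{(n)}) ⊗ E_{ji}^{(n)}`) and `ρ = τ ⊗ σ` with `τ`
hermitian, the symmetric bloom `ψ_S(ρ, E) = ½{ρ ⊗ 1, J[E]}` equals
`τ ⊗ ψ_S(σ, id)` (up to the associativity reindexing of the tensor factors), where
`ψ_S(σ, id) = ½{σ ⊗ 1, J[id]}` and `J[id] = ∑_{i,j} E_{ij} ⊗ E_{ji}`. -/
theorem symmetric_bloom_partial_trace (p n : ℕ)
    (τ : Matrix (Fin p) (Fin p) ℂ) (hτ : τ.IsHermitian)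
    (σ : Matrix (Fin n) (Fin n) ℂ)
    (J : Matrix ((Fin p × Fin n) × Fin n) ((Fin p × Fin n) × Fin n) ℂ)
    (hJ : J = ∑ i : Fin n, ∑ j : Fin n,
      ((1 : Matrix (Fin p) (Fin p) ℂ) ⊗ₖ Matrix.single i j (1 : ℂ))
        ⊗ₖ Matrix.single j i (1 : ℂ))
    (Jid : Matrix (Fin n × Fin n) (Fin n × Fin n) ℂ)
    (hJid : Jid = ∑ i : Fin n, ∑ j : Fin n,
      Matrix.single i j (1 : ℂ) ⊗ₖ Matrix.single j i (1 : ℂ)) :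
    (1 / 2 : ℂ) • (((τ ⊗ₖ σ) ⊗ₖ (1 : Matrix (Fin n) (Fin n) ℂ)) * J
        + J * ((τ ⊗ₖ σ) ⊗ₖ (1 : Matrix (Fin n) (Fin n) ℂ)))
    = Matrix.reindex (Equiv.prodAssoc (Fin p) (Fin n) (Fin n)).symm
        (Equiv.prodAssoc (Fin p) (Fin n) (Fin n)).symm
        (τ ⊗ₖ ((1 / 2 : ℂ) • ((σ ⊗ₖ (1 : Matrix (Fin n) (Fin n) ℂ)) * Jid
          + Jid * (σ ⊗ₖ (1 : Matrix (Fin n) (Fin n) ℂ))))) :=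
  symmetric_bloom_partial_trace_general p n τ σ J hJ Jid hJid
end
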